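/- arXiv:2505.23623 — 2 statements merged into one kernel-verified Lean document; each statement's English description precedes it below -/
import Mathlib

section
/- Let Σ be a finite alphabet containing two distinct symbols a and b. The language aΣ*b of all strings that begin with a and end with b is definable in LTL[P,F] but is not PTL-definable; consequently PTL is strictly less expressive than LTL[P,F]. -/
/-- PTL formulas over alphabet `α`: atoms, conjunction, negation, and the past operator. -/
inductive PTL (α : Type*) : Type _
  | atom : α → PTL α
  | conj : PTL α → PTL α → PTL α
  | neg : PTL α → PTL α
  | past : PTL α → PTL α

/-- Satisfaction of a PTL formula in string `w` at (1-based) position `n ∈ {1,…,N+1}`. -/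
def PTL.Sat {α : Type*} (w : List α) : PTL α → ℕ → Prop
  | .atom a, n => 1 ≤ n ∧ w[n - 1]? = some a
  | .conj ψ₁ ψ₂, n => PTL.Sat w ψ₁ n ∧ PTL.Sat w ψ₂ n
  | .neg ψ, n => ¬ PTL.Sat w ψ n
  | .past ψ, n => ∃ m, 1 ≤ m ∧ m < n ∧ PTL.Sat w ψ m

/-- A string `w` of length `N` satisfies `ψ` iff `w, N+1 ⊨ ψ`. -/
def PTL.Models {α : Type*} (w : List α) (ψ : PTL α) : Prop :=
  PTL.Sat w ψ (w.length + 1)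

/-- A language is PTL-definable if it is the set of strings satisfying some PTL formula. -/
def PTLDefinable {α : Type*} (L : Set (List α)) : Prop :=
  ∃ ψ : PTL α, ∀ w : List α, w ∈ L ↔ PTL.Models w ψ

/-- LTL[P,F] formulas: PTL extended with the future operator. -/
inductive LTLPF (α : Type*) : Type _
  | atom : α → LTLPF α
  | conj : LTLPF α → LTLPF α → LTLPF α
  | neg : LTLPF α → LTLPF α
  | past : LTLPF α → LTLPF α
  | future : LTLPF α → LTLPF α

/-- Satisfaction of an LTL[P,F] formula in `w` at position `n`. -/
def LTLPF.Sat {α : Type*} (w : List α) : LTLPF α → ℕ → Prop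
  | .atom a, n => 1 ≤ n ∧ w[n - 1]? = some a
  | .conj ψ₁ ψ₂, n => LTLPF.Sat w ψ₁ n ∧ LTLPF.Sat w ψ₂ n
  | .neg ψ, n => ¬ LTLPF.Sat w ψ n
  | .past ψ, n => ∃ m, 1 ≤ m ∧ m < n ∧ LTLPF.Sat w ψ m
  | .future ψ, n => ∃ m, n < m ∧ m ≤ w.length ∧ LTLPF.Sat w ψ m

/-- A string `w` of length `N` satisfies `ψ` iff `w, N+1 ⊨ ψ`. -/
def LTLPF.Models {α : Type*} (w : List α) (ψ : LTLPF α) : Prop :=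
  LTLPF.Sat w ψ (w.length + 1)

/-- A language is LTL[P,F]-definable. -/
def LTLPFDefinable {α : Type*} (L : Set (List α)) : Prop :=
  ∃ ψ : LTLPF α, ∀ w : List α, w ∈ L ↔ LTLPF.Models w ψ

/-! At the end position `N + 1` of a word no atom holds, so there the truth value of a PTL
formula is a Boolean combination of truth values of formulas `P χ`. Each `w ⊨ P χ` persists
when `w` is extended, since the truth of `χ` at positions `≤ |w|` only depends on `w`. Hence
along any chain of words, each a prefix of the next, the truth value of a PTL formula is
eventually constant. The chain `a, ab, aba, abab, …` alternates in and out of `aΣ*b`, so this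
language is not PTL-definable. In LTL[P,F] it is defined by saying that the position without
predecessor carries `a` and the position without successor carries `b`. -/

open Filter

theorem Monotone.eventuallyConst_atTop {ι : Type*} [SemilatticeSup ι] [Nonempty ι]
    {p : ι → Prop} (hp : Monotone p) : EventuallyConst p atTop := by
  rw [eventuallyConst_pred]
  by_cases h : ∃ i, p i
  · obtain ⟨i, hi⟩ := h
    exact .inl (eventually_atTop.2 ⟨i, fun _ hj ↦ hp hj hi⟩)
  · exact .inr (.of_forall (not_exists.1 h))

theorem Nat.not_eventuallyConst_odd : ¬ EventuallyConst (fun n : ℕ ↦ Odd n) atTop := by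
  rw [eventuallyConst_atTop_nat]
  rintro ⟨n, hn⟩
  have hstep := hn n le_rfl
  rw [eq_iff_iff, Nat.odd_add_one] at hstep
  exact iff_not_self hstep.symm

theorem List.exists_eq_cons_append_singleton_iff {α : Type*} {a b : α} (hab : a ≠ b)
    {w : List α} : (∃ u, w = a :: u ++ [b]) ↔ w.head? = some a ∧ w.getLast? = some b := by
  constructor
  · rintro ⟨u, rfl⟩
    exact ⟨rfl, getLast?_concat⟩
  · rintro ⟨hhead, hlast⟩
    obtain ⟨t, rfl⟩ : ∃ t, w = a :: t := by
      cases w <;> simp_all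
    rcases eq_nil_or_concat t with rfl | ⟨u, x, rfl⟩
    · simp [hab] at hlast
    · rw [concat_eq_append, ← cons_append, getLast?_concat, Option.some_inj] at hlast
      exact ⟨u, by rw [concat_eq_append, hlast]; rfl⟩

namespace PTL

variable {α : Type*}

theorem sat_append_of_le_length {w : List α} (v : List α) (ψ : PTL α) {n : ℕ}
    (hn : n ≤ w.length) : Sat (w ++ v) ψ n ↔ Sat w ψ n := by
  induction ψ generalizing n with
  | atom c =>
    simp only [Sat, and_congr_right_iff]
    intro h
    rw [List.getElem?_append_left (by omega)]
  | conj ψ₁ ψ₂ ih₁ ih₂ => exact and_congr (ih₁ hn) (ih₂ hn)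
  | neg ψ ih => exact not_congr (ih hn)
  | past ψ ih =>
    exact exists_congr fun m ↦ and_congr_right fun _ ↦ and_congr_right fun hm ↦ ih (by omega)

theorem not_models_atom (w : List α) (c : α) : ¬ Models w (atom c) := by
  simp [Models, Sat]

theorem Models.past_of_prefix {w v : List α} {χ : PTL α} (hwv : w <+: v)
    (h : Models w (past χ)) : Models v (past χ) := by
  obtain ⟨t, rfl⟩ := hwv
  obtain ⟨m, hm₁, hm, hχ⟩ := h
  exact ⟨m, hm₁, by simp; omega, (sat_append_of_le_length t χ (by omega)).2 hχ⟩

theorem eventuallyConst_models {ι : Type*} [SemilatticeSup ι] [Nonempty ι] {W : ι → List α}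
    (hW : ∀ ⦃i j⦄, i ≤ j → W i <+: W j) (ψ : PTL α) :
    EventuallyConst (fun i ↦ Models (W i) ψ) atTop := by
  induction ψ with
  | atom c => simpa only [not_models_atom, false_iff] using EventuallyConst.const False
  | conj ψ₁ ψ₂ ih₁ ih₂ => exact ih₁.comp₂ (· ∧ ·) ih₂
  | neg ψ ih => exact ih.comp Not
  | past ψ =>
    exact Monotone.eventuallyConst_atTop fun _ _ hij ↦ Models.past_of_prefix (hW hij)

def toLTLPF : PTL α → LTLPF α
  | atom c => .atom c
  | conj ψ₁ ψ₂ => .conj ψ₁.toLTLPF ψ₂.toLTLPF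
  | neg ψ => .neg ψ.toLTLPF
  | past ψ => .past ψ.toLTLPF

theorem sat_toLTLPF (w : List α) (ψ : PTL α) (n : ℕ) :
    LTLPF.Sat w ψ.toLTLPF n ↔ Sat w ψ n := by
  induction ψ generalizing n with
  | atom c => rfl
  | conj ψ₁ ψ₂ ih₁ ih₂ => exact and_congr (ih₁ n) (ih₂ n)
  | neg ψ ih => exact not_congr (ih n)
  | past ψ ih =>
    exact exists_congr fun m ↦ and_congr_right fun _ ↦ and_congr_right fun _ ↦ ih m

theorem _root_.PTLDefinable.ltlpfDefinable {L : Set (List α)} (hL : PTLDefinable L) :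
    LTLPFDefinable L := by
  obtain ⟨ψ, hψ⟩ := hL
  exact ⟨ψ.toLTLPF, fun w ↦ (hψ w).trans (sat_toLTLPF w ψ _).symm⟩

end PTL

namespace LTLPF

variable {α : Type*}

def verum (c : α) : LTLPF α := neg (conj (atom c) (neg (atom c)))

theorem sat_verum (w : List α) (c : α) (n : ℕ) : Sat w (verum c) n := by
  simp [verum, Sat]

def startsWith (c : α) : LTLPF α := past (conj (atom c) (neg (past (verum c))))

def endsWith (c : α) : LTLPF α := past (conj (atom c) (neg (future (verum c))))

theorem models_startsWith_iff {w : List α} {c : α} :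
    Models w (startsWith c) ↔ w.head? = some c := by
  simp only [Models, startsWith, Sat, sat_verum, and_true, List.head?_eq_getElem?]
  constructor
  · rintro ⟨m, hm₁, -, ⟨-, hc⟩, hfirst⟩
    obtain rfl : m = 1 := by by_contra h; exact hfirst ⟨1, le_rfl, by omega⟩
    exact hc
  · intro hc
    have hlen : 0 < w.length := List.length_pos_iff.2 (by rintro rfl; simp at hc)
    exact ⟨1, le_rfl, by omega, ⟨le_rfl, hc⟩, by omega⟩

theorem models_endsWith_iff {w : List α} {c : α} :
    Models w (endsWith c) ↔ w.getLast? = some c := by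
  simp only [Models, endsWith, Sat, sat_verum, and_true, List.getLast?_eq_getElem?]
  constructor
  · rintro ⟨m, hm₁, hm, ⟨-, hc⟩, hlast⟩
    obtain rfl : m = w.length := by by_contra h; exact hlast ⟨m + 1, by omega, by omega⟩
    exact hc
  · intro hc
    have hlen : 0 < w.length := List.length_pos_iff.2 (by rintro rfl; simp at hc)
    exact ⟨w.length, by omega, by omega, ⟨by omega, hc⟩, by omega⟩

end LTLPF

section AlternatingWord

variable {α : Type*} (a b : α)

def alternatingWord (n : ℕ) : List α :=
  (List.range (n + 1)).map fun i ↦ if Even i then a else b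

theorem alternatingWord_prefix_of_le {i j : ℕ} (hij : i ≤ j) :
    alternatingWord a b i <+: alternatingWord a b j := by
  rw [alternatingWord, ← min_eq_left (Nat.add_le_add_right hij 1), ← List.take_range,
    List.map_take]
  exact List.take_prefix _ _

theorem alternatingWord_head? (n : ℕ) : (alternatingWord a b n).head? = some a := by
  simp [alternatingWord, List.head?_range]

theorem alternatingWord_getLast? (n : ℕ) :
    (alternatingWord a b n).getLast? = some (if Even n then a else b) := by
  rw [alternatingWord, List.range_succ, List.map_append, List.map_singleton, List.getLast?_concat]

end AlternatingWord

theorem aSigmaStarB_separates_general {α : Type*} (a b : α) (hab : a ≠ b) :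
    LTLPFDefinable {w : List α | ∃ u : List α, w = a :: u ++ [b]} ∧
    ¬ PTLDefinable {w : List α | ∃ u : List α, w = a :: u ++ [b]} ∧
    (∀ L : Set (List α), PTLDefinable L → LTLPFDefinable L) := by
  have hL : {w : List α | ∃ u, w = a :: u ++ [b]} =
      {w | w.head? = some a ∧ w.getLast? = some b} :=
    Set.ext fun _ ↦ List.exists_eq_cons_append_singleton_iff hab
  rw [hL]
  refine ⟨⟨.conj (.startsWith a) (.endsWith b), fun w ↦ ?_⟩, ?_,
    fun _ ↦ PTLDefinable.ltlpfDefinable⟩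
  · exact and_congr LTLPF.models_startsWith_iff.symm LTLPF.models_endsWith_iff.symm
  · rintro ⟨ψ, hψ⟩
    have hodd (n : ℕ) : PTL.Models (alternatingWord a b n) ψ ↔ Odd n := by
      rw [← hψ, Set.mem_ofPred_eq, alternatingWord_head?, alternatingWord_getLast?]
      split_ifs with hn <;> simp_all [Nat.not_even_iff_odd]
    apply Nat.not_eventuallyConst_odd
    simpa only [hodd] using
      PTL.eventuallyConst_models (fun _ _ ↦ alternatingWord_prefix_of_le a b) ψ

/-- The language `aΣ*b` is LTL[P,F]-definable but not PTL-definable;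
consequently PTL is strictly less expressive than LTL[P,F]. -/
theorem aSigmaStarB_separates {α : Type*} [Fintype α] (a b : α) (hab : a ≠ b) :
    LTLPFDefinable {w : List α | ∃ u : List α, w = a :: u ++ [b]} ∧
    ¬ PTLDefinable {w : List α | ∃ u : List α, w = a :: u ++ [b]} ∧
    (∀ L : Set (List α), PTLDefinable L → LTLPFDefinable L) :=
  aSigmaStarB_separates_general a b hab
end

section
/- A finite monoid M is R-trivial if and only if there exists an integer K > 0 such that (st)^K s = (st)^K for all s, t ∈ M. -/
/-- A monoid `M` is R-trivial if `sM = tM` implies `s = t`. -/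
def RTrivial (M : Type*) [Monoid M] : Prop :=
  ∀ s t : M, Set.range (fun m => s * m) = Set.range (fun m => t * m) → s = t

/-!
In a finite monoid `x ^ |M|!` is idempotent for every `x`: by pigeonhole some `x ^ i` with
`i ≤ |M|` satisfies `x ^ i x ^ p = x ^ i` for some `0 < p ≤ |M|`, and `p ∣ |M|!`.
For an idempotent `e = (st)^K` with `K > 0`, the elements `e s` and `e = e s · t (st)^(K-1)`
generate the same right ideal, so R-triviality forces `e s = e`. Conversely, if `t = s b` and
`s = t a` then `s (ba)^K = s`, and `(ba)^K b = (ba)^K` turns `t = s (ba)^K b` into `t = s`.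
-/

open Function Nat

section Monoid

variable {M : Type*} [Monoid M]

theorem isIdempotentElem_pow_of_pow_mul_pow_eq {x : M} {i p n : ℕ} (h : x ^ i * x ^ p = x ^ i)
    (hpn : p ∣ n) (hin : i ≤ n) : IsIdempotentElem (x ^ n) := by
  have hp : IsPeriodicPt (· * x) p (x ^ i) := by
    simpa only [IsPeriodicPt, IsFixedPt, mul_right_iterate_apply] using h
  have hn : x ^ i * x ^ n = x ^ i := by
    simpa only [IsPeriodicPt, IsFixedPt, mul_right_iterate_apply] using hp.trans_dvd hpn
  obtain ⟨r, rfl⟩ := Nat.exists_eq_add_of_le hin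
  calc x ^ (i + r) * x ^ (i + r) = x ^ i * x ^ (i + r) * x ^ r := by
        rw [← pow_add, ← pow_add, ← pow_add]; ring_nf
    _ = x ^ (i + r) := by rw [hn, pow_add]

theorem range_mul_left_subset_iff {s t : M} :
    Set.range (s * ·) ⊆ Set.range (t * ·) ↔ t ∣ s := by
  constructor
  · intro h
    obtain ⟨a, ha⟩ := h ⟨1, mul_one s⟩
    exact ⟨a, ha.symm⟩
  · rintro ⟨a, rfl⟩ _ ⟨m, rfl⟩
    exact ⟨a * m, (mul_assoc t a m).symm⟩

theorem rTrivial_iff_dvd_antisymm : RTrivial M ↔ ∀ s t : M, s ∣ t → t ∣ s → s = t := by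
  simp only [RTrivial, Set.Subset.antisymm_iff, range_mul_left_subset_iff]
  exact forall₂_congr fun _ _ => and_imp.trans Imp.swap

theorem RTrivial.pow_mul_eq_pow (h : RTrivial M) {s t : M} {K : ℕ} (hK : 0 < K)
    (he : IsIdempotentElem ((s * t) ^ K)) : (s * t) ^ K * s = (s * t) ^ K := by
  obtain ⟨k, rfl⟩ := Nat.exists_eq_add_one_of_ne_zero hK.ne'
  refine rTrivial_iff_dvd_antisymm.mp h _ _ ?_ (dvd_mul_right _ _)
  refine ⟨t * (s * t) ^ k, ?_⟩
  calc (s * t) ^ (k + 1) = (s * t) ^ (k + 1) * (s * t) ^ (k + 1) := he.symm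
    _ = (s * t) ^ (k + 1) * s * (t * (s * t) ^ k) := by
        rw [pow_succ' (s * t) k]; simp only [mul_assoc]

theorem eq_of_dvd_of_dvd_of_pow_mul_eq_pow {K : ℕ} (hK : ∀ s t : M, (s * t) ^ K * s = (s * t) ^ K)
    {s t : M} (hst : s ∣ t) (hts : t ∣ s) : s = t := by
  obtain ⟨b, rfl⟩ := hst
  obtain ⟨a, ha⟩ := hts
  have hfix : IsFixedPt (· * (b * a)) s := by
    simp only [IsFixedPt, ← mul_assoc, ← ha]
  have hpow : s * (b * a) ^ K = s := by
    simpa only [IsFixedPt, mul_right_iterate_apply] using hfix.iterate K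
  calc s = s * (b * a) ^ K := hpow.symm
    _ = s * ((b * a) ^ K * b) := by rw [hK]
    _ = s * b := by rw [← mul_assoc, hpow]

end Monoid

theorem isIdempotentElem_pow_factorial_card {M : Type*} [Monoid M] [Fintype M] (x : M) :
    IsIdempotentElem (x ^ (Fintype.card M)!) := by
  obtain ⟨i, j, hij, hx⟩ := Fintype.exists_ne_map_eq_of_card_lt
    (fun k : Fin (Fintype.card M + 1) => x ^ (k : ℕ)) (by simp)
  wlog hlt : i < j generalizing i j
  · exact this j i hij.symm hx.symm (lt_of_le_of_ne (not_lt.mp hlt) hij.symm)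
  refine isIdempotentElem_pow_of_pow_mul_pow_eq (p := j - i) ?_
    (Nat.dvd_factorial (by omega) (by omega)) ((Nat.lt_succ_iff.mp i.2).trans (self_le_factorial _))
  rw [← pow_add, Nat.add_sub_cancel' hlt.le]
  exact hx.symm

/-- A finite monoid `M` is R-trivial iff there is `K > 0` with
`(st)^K s = (st)^K` for all `s, t ∈ M`. -/
theorem rtrivial_iff_pow (M : Type*) [Monoid M] [Fintype M] :
    RTrivial M ↔ ∃ K : ℕ, 0 < K ∧ ∀ s t : M, (s * t) ^ K * s = (s * t) ^ K := by
  constructor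
  · intro h
    exact ⟨(Fintype.card M)!, factorial_pos _, fun s t =>
      h.pow_mul_eq_pow (factorial_pos _) (isIdempotentElem_pow_factorial_card _)⟩
  · rintro ⟨K, -, hK⟩
    exact rTrivial_iff_dvd_antisymm.mpr fun _ _ => eq_of_dvd_of_dvd_of_pow_mul_eq_pow hK
end
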